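/- arXiv:1401.4400 — 2 statements merged into one kernel-verified Lean document; each statement's English description precedes it below -/
import Mathlib

section
/- There is no C² function v : ℝ² → ℝ such that v(x) < 0 for all x and ∫_{B_r(0)} Δv dx ≥ C for all r ≥ 1, for some constant C > 0. -/
/-!
Test the hypothesis against the radial cutoffs `φ_L x = h_L (log ‖x‖²)`, where `h_L` decreases
from `1` on `(-∞, 0]` to `0` on `[L + 1, ∞)`, with `h_L'' ≥ -O(1/L)` everywhere and `h_L'' ≥ 0` on
`(1, ∞)`.

Since `φ_L` is radial, nonincreasing in `‖x‖` and constant on the unit ball, it is a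
superposition of indicators of balls `B_r`, `r ≥ 1`, with total weight `1`; hence
`C ≤ ∫ Δv φ_L = ∫ v Δφ_L` by Green's formula. In the plane `log ‖x‖²` is harmonic, so
`Δφ_L = 4 h_L''(log ‖x‖²) / ‖x‖²`: it is nonnegative outside `‖x‖² ≤ e` and `≥ -O(1/L)` inside.
As `v < 0`, this gives `∫ v Δφ_L ≤ O(1/L) · sup_{B_2} |v|`, and `L → ∞` yields `C ≤ 0`.
-/

open MeasureTheory

/-- The Laplacian of `f : ℝ^n → ℝ` at `x`: sum of the second derivatives
along the coordinate directions. -/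
noncomputable def lap {n : ℕ} (f : EuclideanSpace ℝ (Fin n) → ℝ)
    (x : EuclideanSpace ℝ (Fin n)) : ℝ :=
  ∑ i : Fin n, iteratedDeriv 2 (fun t : ℝ => f (x + t • EuclideanSpace.single i (1 : ℝ))) 0

open Real Set Filter Topology Metric

noncomputable section

lemma Continuous.integrable_mul_of_hasCompactSupport {X : Type*} [TopologicalSpace X]
    [MeasurableSpace X] [OpensMeasurableSpace X] {μ : Measure X} [IsFiniteMeasureOnCompacts μ]
    {a b : X → ℝ} (ha : Continuous a) (hb : Continuous b) (hbc : HasCompactSupport b) :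
    Integrable (fun x => a x * b x) μ :=
  (ha.mul hb).integrable_of_hasCompactSupport hbc.mul_left

section SecondDerivatives

variable {E : Type*} [NormedAddCommGroup E] [NormedSpace ℝ E]

lemma hasDerivAt_comp_add_smul {f : E → ℝ} {x e : E} {t : ℝ}
    (hf : DifferentiableAt ℝ f (x + t • e)) :
    HasDerivAt (fun s : ℝ => f (x + s • e)) (fderiv ℝ f (x + t • e) e) t := by
  have : HasDerivAt (fun s : ℝ => x + s • e) e t := by
    simpa using ((hasDerivAt_id t).smul_const e).const_add x
  exact hf.hasFDerivAt.comp_hasDerivAt t this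

lemma contDiff_fderiv_apply {f : E → ℝ} (hf : ContDiff ℝ 2 f) (e : E) :
    ContDiff ℝ 1 fun y => fderiv ℝ f y e :=
  (hf.fderiv_right one_add_one_eq_two.le).clm_apply contDiff_const

lemma continuous_fderiv_fderiv_apply {f : E → ℝ} (hf : ContDiff ℝ 2 f) (e : E) :
    Continuous fun x => fderiv ℝ (fun y => fderiv ℝ f y e) x e :=
  ((contDiff_fderiv_apply hf e).continuous_fderiv one_ne_zero).clm_apply continuous_const

lemma iteratedDeriv_two_comp_add_smul {f : E → ℝ} (hf : ContDiff ℝ 2 f) (x e : E) :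
    iteratedDeriv 2 (fun t : ℝ => f (x + t • e)) 0 = fderiv ℝ (fun y => fderiv ℝ f y e) x e := by
  have hd : deriv (fun t : ℝ => f (x + t • e)) = fun t => fderiv ℝ f (x + t • e) e :=
    funext fun t => (hasDerivAt_comp_add_smul (hf.differentiable two_ne_zero _)).deriv
  rw [iteratedDeriv_succ, iteratedDeriv_one, hd]
  simpa using (hasDerivAt_comp_add_smul (t := 0)
    ((contDiff_fderiv_apply hf e).differentiable one_ne_zero _)).deriv

variable [MeasurableSpace E] [BorelSpace E] [FiniteDimensional ℝ E] {μ : Measure E}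
  [μ.IsAddHaarMeasure]

theorem integral_fderiv_fderiv_mul_eq_mul_fderiv_fderiv {f φ : E → ℝ} (hf : ContDiff ℝ 2 f)
    (hφ : ContDiff ℝ 2 φ) (hφc : HasCompactSupport φ) (e : E) :
    ∫ x, fderiv ℝ (fun y => fderiv ℝ f y e) x e * φ x ∂μ =
      ∫ x, f x * fderiv ℝ (fun y => fderiv ℝ φ y e) x e ∂μ := by
  have hf1 := contDiff_fderiv_apply hf e
  have hφ1 := contDiff_fderiv_apply hφ e
  have hφ1c : HasCompactSupport fun y => fderiv ℝ φ y e := hφc.fderiv_apply ℝ e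
  have hfirst := integral_mul_fderiv_eq_neg_fderiv_mul_of_integrable (μ := μ)
    (f := fun y => fderiv ℝ f y e) (g := φ) (v := e)
    ((continuous_fderiv_fderiv_apply hf e).integrable_mul_of_hasCompactSupport hφ.continuous hφc)
    (hf1.continuous.integrable_mul_of_hasCompactSupport hφ1.continuous hφ1c)
    (hf1.continuous.integrable_mul_of_hasCompactSupport hφ.continuous hφc)
    (fun x _ => (hf1.differentiable one_ne_zero) x) (fun x _ => (hφ.differentiable two_ne_zero) x)
  have hsecond := integral_mul_fderiv_eq_neg_fderiv_mul_of_integrable (μ := μ)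
    (f := f) (g := fun y => fderiv ℝ φ y e) (v := e)
    (hf1.continuous.integrable_mul_of_hasCompactSupport hφ1.continuous hφ1c)
    (hf.continuous.integrable_mul_of_hasCompactSupport (continuous_fderiv_fderiv_apply hφ e)
      (hφ1c.fderiv_apply ℝ e))
    (hf.continuous.integrable_mul_of_hasCompactSupport hφ1.continuous hφ1c)
    (fun x _ => (hf.differentiable two_ne_zero) x) (fun x _ => (hφ1.differentiable one_ne_zero) x)
  rw [hsecond, ← neg_neg (∫ x, _ * φ x ∂μ), ← hfirst]

end SecondDerivatives

section Laplacian

variable {n : ℕ}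

local notation "e" i => EuclideanSpace.single i (1 : ℝ)

lemma lap_eq_sum_fderiv_fderiv {f : EuclideanSpace ℝ (Fin n) → ℝ} (hf : ContDiff ℝ 2 f)
    (x : EuclideanSpace ℝ (Fin n)) :
    lap f x = ∑ i, fderiv ℝ (fun y => fderiv ℝ f y (e i)) x (e i) := by
  simp only [lap, iteratedDeriv_two_comp_add_smul hf]

lemma continuous_lap {f : EuclideanSpace ℝ (Fin n) → ℝ} (hf : ContDiff ℝ 2 f) :
    Continuous (lap f) := by
  simp only [funext (lap_eq_sum_fderiv_fderiv hf)]
  exact continuous_finsetSum _ fun i _ => continuous_fderiv_fderiv_apply hf _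

lemma integrable_mul_lap {f φ : EuclideanSpace ℝ (Fin n) → ℝ} (hf : Continuous f)
    (hφ : ContDiff ℝ 2 φ) (hφc : HasCompactSupport φ) :
    Integrable fun x => f x * lap φ x := by
  simp only [lap_eq_sum_fderiv_fderiv hφ, Finset.mul_sum]
  exact integrable_finsetSum _ fun i _ => hf.integrable_mul_of_hasCompactSupport
    (continuous_fderiv_fderiv_apply hφ _) ((hφc.fderiv_apply ℝ _).fderiv_apply ℝ _)

theorem integral_lap_mul_eq_mul_lap {f φ : EuclideanSpace ℝ (Fin n) → ℝ} (hf : ContDiff ℝ 2 f)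
    (hφ : ContDiff ℝ 2 φ) (hφc : HasCompactSupport φ) :
    ∫ x, lap f x * φ x = ∫ x, f x * lap φ x := by
  simp only [lap_eq_sum_fderiv_fderiv hf, lap_eq_sum_fderiv_fderiv hφ, Finset.sum_mul,
    Finset.mul_sum]
  rw [integral_finsetSum _ fun i _ => (continuous_fderiv_fderiv_apply hf _)
      |>.integrable_mul_of_hasCompactSupport hφ.continuous hφc,
    integral_finsetSum _ fun i _ => hf.continuous.integrable_mul_of_hasCompactSupport
      (continuous_fderiv_fderiv_apply hφ _) ((hφc.fderiv_apply ℝ _).fderiv_apply ℝ _)]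
  exact Finset.sum_congr rfl fun i _ =>
    integral_fderiv_fderiv_mul_eq_mul_fderiv_fderiv hf hφ hφc _

theorem lap_comp_norm_sq {F F' F'' : ℝ → ℝ} (hF : ∀ u, HasDerivAt F (F' u) u)
    (hF' : ∀ u, HasDerivAt F' (F'' u) u) (x : EuclideanSpace ℝ (Fin n)) :
    lap (fun y => F (‖y‖ ^ 2)) x = 4 * ‖x‖ ^ 2 * F'' (‖x‖ ^ 2) + 2 * n * F' (‖x‖ ^ 2) := by
  have hline : ∀ i t, HasDerivAt (fun s : ℝ => ‖x + s • e i‖ ^ 2) (2 * (x i + t)) t := by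
    intro i t
    have := (((hasDerivAt_id t).smul_const (e i)).const_add x).norm_sq
    simpa [inner_add_left, inner_smul_left, EuclideanSpace.inner_single_right] using this
  have hterm : ∀ i, iteratedDeriv 2 (fun t : ℝ => F (‖x + t • e i‖ ^ 2)) 0 =
      4 * F'' (‖x‖ ^ 2) * x i ^ 2 + 2 * F' (‖x‖ ^ 2) := by
    intro i
    have hd : deriv (fun t : ℝ => F (‖x + t • e i‖ ^ 2)) =
        fun t => F' (‖x + t • e i‖ ^ 2) * (2 * (x i + t)) :=
      funext fun t => ((hF _).comp t (hline i t)).deriv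
    rw [iteratedDeriv_succ, iteratedDeriv_one, hd]
    have : HasDerivAt (fun t => F' (‖x + t • e i‖ ^ 2) * (2 * (x i + t))) _ 0 :=
      ((hF' _).comp 0 (hline i 0)).mul (((hasDerivAt_id (0 : ℝ)).const_add (x i)).const_mul 2)
    rw [this.deriv]
    simp only [Function.comp_apply, zero_smul, add_zero, mul_one]
    ring
  have hnorm : ∑ i, x i ^ 2 = ‖x‖ ^ 2 := by
    simp [EuclideanSpace.norm_sq_eq]
  simp only [lap, hterm, Finset.sum_add_distrib, ← Finset.mul_sum, hnorm, Finset.sum_const,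
    Finset.card_univ, Fintype.card_fin, nsmul_eq_mul]
  ring

end Laplacian

section LayerCake

variable {E : Type*} [NormedAddCommGroup E] {g : E → ℝ} {ω : ℝ → ℝ}

lemma integral_indicator_norm_lt_mul_Ioi (x : E) :
    ∫ r, {p : E × ℝ | ‖p.1‖ < p.2}.indicator (fun p => g p.1 * ω p.2) (x, r) =
      g x * ∫ r in Ioi ‖x‖, ω r := by
  rw [← integral_const_mul, ← integral_indicator measurableSet_Ioi]
  rfl

variable [MeasurableSpace E] [BorelSpace E] {μ : Measure E}

lemma integral_indicator_norm_lt_mul_ball (r : ℝ) :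
    ∫ x, {p : E × ℝ | ‖p.1‖ < p.2}.indicator (fun p => g p.1 * ω p.2) (x, r) ∂μ =
      ω r * ∫ x in ball 0 r, g x ∂μ := by
  rw [mul_comm, ← integral_mul_const, ← integral_indicator measurableSet_ball]
  congr 1 with x
  simp [indicator]

variable [ProperSpace E] [IsFiniteMeasureOnCompacts μ]

lemma integrable_indicator_norm_lt_mul (hg : Continuous g) (hω : Continuous ω)
    (hωc : HasCompactSupport ω) :
    Integrable ({p : E × ℝ | ‖p.1‖ < p.2}.indicator fun p => g p.1 * ω p.2) (μ.prod volume) := by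
  obtain ⟨R, hR⟩ := hωc.isCompact.isBounded.subset_closedBall 0
  set K : Set (E × ℝ) := closedBall 0 R ×ˢ closedBall 0 R
  have hK : IsCompact K := (isCompact_closedBall 0 R).prod (isCompact_closedBall 0 R)
  have hmeas : MeasurableSet {p : E × ℝ | ‖p.1‖ < p.2} :=
    (isOpen_lt (continuous_norm.comp continuous_fst) continuous_snd).measurableSet
  have heq : {p : E × ℝ | ‖p.1‖ < p.2}.indicator (fun p => g p.1 * ω p.2) =
      ({p : E × ℝ | ‖p.1‖ < p.2} ∩ K).indicator fun p => g p.1 * ω p.2 := by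
    funext p
    by_cases hp : ‖p.1‖ < p.2
    swap
    · simp [hp]
    by_cases hω0 : ω p.2 = 0
    · simp [indicator, hω0]
    have h2 : p.2 ∈ closedBall 0 R := hR (subset_tsupport _ hω0)
    have h1 : p.1 ∈ closedBall 0 R := by
      rw [mem_closedBall_zero_iff, Real.norm_eq_abs] at h2
      rw [mem_closedBall_zero_iff]
      linarith [le_abs_self p.2]
    simp [hp, K, h1, h2]
  rw [heq, integrable_indicator_iff (hmeas.inter hK.measurableSet)]
  exact (((hg.comp continuous_fst).mul (hω.comp continuous_snd)).continuousOn.integrableOn_compact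
    hK).mono_set inter_subset_right

lemma integral_mul_integral_Ioi_norm (hg : Continuous g) (hω : Continuous ω)
    (hωc : HasCompactSupport ω) :
    ∫ x, g x * (∫ r in Ioi ‖x‖, ω r) ∂μ = ∫ r, ω r * ∫ x in ball 0 r, g x ∂μ := by
  simp only [← integral_indicator_norm_lt_mul_ball, ← integral_indicator_norm_lt_mul_Ioi]
  exact integral_integral_swap (integrable_indicator_norm_lt_mul hg hω hωc)

lemma integrable_mul_integral_ball (hg : Continuous g) (hω : Continuous ω)
    (hωc : HasCompactSupport ω) :
    Integrable fun r => ω r * ∫ x in ball 0 r, g x ∂μ := by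
  simp only [← integral_indicator_norm_lt_mul_ball]
  exact (integrable_indicator_norm_lt_mul hg hω hωc).integral_prod_right

theorem le_integral_mul_radial (hg : Continuous g) {ψ : ℝ → ℝ} (hψ : ContDiff ℝ 1 ψ)
    (hψc : HasCompactSupport ψ) (hψ_flat : ∀ r ∈ Ioo 0 1, deriv ψ r = 0)
    (hψ_anti : ∀ r ≥ 1, deriv ψ r ≤ 0) {C : ℝ} (hC : ∀ r ≥ 1, C ≤ ∫ x in ball 0 r, g x ∂μ) :
    C * ψ 0 ≤ ∫ x, g x * ψ ‖x‖ ∂μ := by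
  have hω : Continuous (-deriv ψ) := (hψ.continuous_deriv le_rfl).neg
  have hωc : HasCompactSupport (-deriv ψ) := hψc.deriv.neg
  have htail : ∀ b, ∫ r in Ioi b, (-deriv ψ) r = ψ b := fun b => by
    rw [Pi.neg_def, integral_neg, hψc.integral_Ioi_deriv_eq hψ b, neg_neg]
  have hlower : ∀ r, (Ioi 0).indicator (fun r => C * (-deriv ψ) r) r ≤
      (-deriv ψ) r * ∫ x in ball 0 r, g x ∂μ := fun r => by
    rcases le_or_gt r 0 with hr | hr
    · rw [indicator_of_notMem (show r ∉ Ioi 0 from not_lt.2 hr), ball_eq_empty.2 hr]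
      simp
    rw [indicator_of_mem (show r ∈ Ioi 0 from hr)]
    rcases lt_or_ge r 1 with hr1 | hr1
    · simp [hψ_flat r ⟨hr, hr1⟩]
    · rw [mul_comm]
      exact mul_le_mul_of_nonneg_left (hC r hr1) (neg_nonneg.2 (hψ_anti r hr1))
  calc C * ψ 0 = ∫ r, (Ioi 0).indicator (fun r => C * (-deriv ψ) r) r := by
        rw [integral_indicator measurableSet_Ioi, integral_const_mul, htail]
    _ ≤ ∫ r, (-deriv ψ) r * ∫ x in ball 0 r, g x ∂μ :=
        integral_mono (((hω.integrable_of_hasCompactSupport hωc).const_mul C).indicator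
          measurableSet_Ioi) (integrable_mul_integral_ball hg hω hωc) hlower
    _ = ∫ x, g x * ψ ‖x‖ ∂μ := by
        simp only [← integral_mul_integral_Ioi_norm hg hω hωc, htail]

end LayerCake

section Profile

lemma deriv_smoothTransition_nonneg (t : ℝ) : 0 ≤ deriv smoothTransition t :=
  smoothTransition.monotone.deriv_nonneg

lemma deriv_smoothTransition_eq_zero {t : ℝ} (ht : t < 0 ∨ 1 < t) :
    deriv smoothTransition t = 0 := by
  rcases ht with ht | ht
  · have : smoothTransition =ᶠ[𝓝 t] fun _ => 0 :=
      (eventually_lt_nhds ht).mono fun s hs => smoothTransition.zero_of_nonpos hs.le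
    rw [this.deriv_eq, deriv_const]
  · have : smoothTransition =ᶠ[𝓝 t] fun _ => 1 :=
      (eventually_gt_nhds ht).mono fun s hs => smoothTransition.one_of_one_le hs.le
    rw [this.deriv_eq, deriv_const]

lemma exists_deriv_smoothTransition_le : ∃ B, ∀ t, deriv smoothTransition t ≤ B := by
  have hsupp : HasCompactSupport (deriv smoothTransition) := by
    refine HasCompactSupport.intro (isCompact_Icc (a := 0) (b := 1)) fun t ht =>
      deriv_smoothTransition_eq_zero ?_
    simp only [mem_Icc, not_and_or, not_le] at ht
    exact ht
  obtain ⟨B, hB⟩ := (smoothTransition.contDiff (n := 1).continuous_deriv le_rfl)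
    |>.bounded_above_of_compact_support hsupp
  exact ⟨B, fun t => (le_abs_self _).trans (hB t)⟩

def smoothRamp (t : ℝ) : ℝ := ∫ s in (0 : ℝ)..t, smoothTransition s

lemma hasDerivAt_smoothRamp (t : ℝ) : HasDerivAt smoothRamp (smoothTransition t) t :=
  (smoothTransition.continuous.integral_hasStrictDerivAt 0 t).hasDerivAt

lemma contDiff_smoothRamp : ContDiff ℝ 2 smoothRamp := by
  have hderiv : deriv smoothRamp = smoothTransition :=
    funext fun t => (hasDerivAt_smoothRamp t).deriv
  refine contDiff_succ_iff_deriv (n := 1).2 ⟨fun t => (hasDerivAt_smoothRamp t).differentiableAt,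
    by simp, ?_⟩
  rw [hderiv]
  exact smoothTransition.contDiff

lemma smoothRamp_of_nonpos {t : ℝ} (ht : t ≤ 0) : smoothRamp t = 0 := by
  rw [smoothRamp, intervalIntegral.integral_congr (g := fun _ => 0), intervalIntegral.integral_zero]
  intro s hs
  rw [uIcc_of_ge ht] at hs
  exact smoothTransition.zero_of_nonpos hs.2

lemma smoothRamp_sub_smoothRamp {s t : ℝ} (hs : 1 ≤ s) (hst : s ≤ t) :
    smoothRamp t - smoothRamp s = t - s := by
  have hint := fun a b => smoothTransition.continuous.intervalIntegrable (μ := volume) a b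
  rw [smoothRamp, smoothRamp, intervalIntegral.integral_interval_sub_left (hint _ _) (hint _ _),
    intervalIntegral.integral_congr (g := fun _ => 1), intervalIntegral.integral_const,
    smul_eq_mul, mul_one]
  intro r hr
  rw [uIcc_of_le hst] at hr
  exact smoothTransition.one_of_one_le (hs.trans hr.1)

/-- The profile `h_L`: `1 - t / L` clamped to `[0, 1]`, with its two corners smoothed out over unit
length by `smoothRamp`. -/
def cutoff (L t : ℝ) : ℝ := 1 - (smoothRamp t - smoothRamp (t - L)) / L

def cutoffDeriv (L t : ℝ) : ℝ := (smoothTransition (t - L) - smoothTransition t) / L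

def cutoffDeriv2 (L t : ℝ) : ℝ :=
  (deriv smoothTransition (t - L) - deriv smoothTransition t) / L

variable {L : ℝ}

lemma hasDerivAt_cutoff (L t : ℝ) : HasDerivAt (cutoff L) (cutoffDeriv L t) t := by
  have := (((hasDerivAt_smoothRamp t).sub
    ((hasDerivAt_smoothRamp (t - L)).comp_sub_const t L)).div_const L).const_sub 1
  exact this.congr_deriv (by rw [cutoffDeriv]; ring)

lemma hasDerivAt_cutoffDeriv (L t : ℝ) :
    HasDerivAt (cutoffDeriv L) (cutoffDeriv2 L t) t := by
  have hσ : Differentiable ℝ smoothTransition :=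
    smoothTransition.contDiff (n := 1).differentiable one_ne_zero
  exact (((hσ (t - L)).hasDerivAt.comp_sub_const t L).sub (hσ t).hasDerivAt).div_const L

lemma contDiff_cutoff (L : ℝ) : ContDiff ℝ 2 (cutoff L) :=
  contDiff_const.sub ((contDiff_smoothRamp.sub
    (contDiff_smoothRamp.comp (contDiff_id.sub contDiff_const))).div_const L)

lemma cutoff_of_nonpos (hL : 0 ≤ L) {t : ℝ} (ht : t ≤ 0) : cutoff L t = 1 := by
  simp [cutoff, smoothRamp_of_nonpos ht, smoothRamp_of_nonpos (by linarith : t - L ≤ 0)]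

lemma cutoff_of_le (hL : 0 < L) {t : ℝ} (ht : L + 1 ≤ t) : cutoff L t = 0 := by
  rw [cutoff, smoothRamp_sub_smoothRamp (by linarith) (by linarith), sub_sub_cancel,
    div_self hL.ne', sub_self]

lemma cutoffDeriv_nonpos (hL : 0 < L) (t : ℝ) : cutoffDeriv L t ≤ 0 :=
  div_nonpos_of_nonpos_of_nonneg
    (sub_nonpos.2 (smoothTransition.monotone (by linarith))) hL.le

lemma cutoffDeriv_of_nonpos (hL : 0 ≤ L) {t : ℝ} (ht : t ≤ 0) : cutoffDeriv L t = 0 := by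
  simp [cutoffDeriv, smoothTransition.zero_of_nonpos ht,
    smoothTransition.zero_of_nonpos (by linarith : t - L ≤ 0)]

lemma cutoffDeriv2_of_neg (hL : 0 ≤ L) {t : ℝ} (ht : t < 0) : cutoffDeriv2 L t = 0 := by
  simp [cutoffDeriv2, deriv_smoothTransition_eq_zero (Or.inl ht),
    deriv_smoothTransition_eq_zero (Or.inl (by linarith : t - L < 0))]

lemma cutoffDeriv2_nonneg (hL : 0 < L) {t : ℝ} (ht : 1 < t) : 0 ≤ cutoffDeriv2 L t := by
  rw [cutoffDeriv2, deriv_smoothTransition_eq_zero (Or.inr ht), sub_zero]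
  exact div_nonneg (deriv_smoothTransition_nonneg _) hL.le

lemma neg_div_le_cutoffDeriv2 {B : ℝ} (hB : ∀ t, deriv smoothTransition t ≤ B) (hL : 0 < L)
    (t : ℝ) : -(B / L) ≤ cutoffDeriv2 L t := by
  rw [cutoffDeriv2, ← neg_div, div_le_div_iff_of_pos_right hL]
  linarith [hB t, deriv_smoothTransition_nonneg (t - L)]

lemma comp_log_eventuallyEq_nhds_zero {k : ℝ → ℝ} {c : ℝ} (hk : ∀ t ≤ 0, k t = c) :
    (fun u => k (log u)) =ᶠ[𝓝 0] fun _ => c := by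
  filter_upwards [Ioo_mem_nhds neg_one_lt_zero one_pos] with u hu
  refine hk _ ?_
  rw [← log_abs]
  exact log_nonpos (abs_nonneg u) (abs_le.2 ⟨hu.1.le, hu.2.le⟩)

/-- Since `log 0 = 0` and `log (-u) = log u`, this equals `1` on all of `[-1, 1]`; in particular it
is smooth at `0`. -/
def logCutoff (L u : ℝ) : ℝ := cutoff L (log u)

def logCutoffDeriv (L u : ℝ) : ℝ := cutoffDeriv L (log u) / u

lemma hasDerivAt_logCutoff (hL : 0 ≤ L) (u : ℝ) :
    HasDerivAt (logCutoff L) (logCutoffDeriv L u) u := by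
  rcases eq_or_ne u 0 with rfl | hu
  · rw [logCutoffDeriv, div_zero]
    exact (hasDerivAt_const 0 1).congr_of_eventuallyEq
      (comp_log_eventuallyEq_nhds_zero fun t => cutoff_of_nonpos hL)
  · exact ((hasDerivAt_cutoff L (log u)).comp u (hasDerivAt_log hu)).congr_deriv
      (div_eq_mul_inv _ _).symm

lemma hasDerivAt_logCutoffDeriv (hL : 0 ≤ L) (u : ℝ) :
    HasDerivAt (logCutoffDeriv L)
      ((cutoffDeriv2 L (log u) - cutoffDeriv L (log u)) / u ^ 2) u := by
  rcases eq_or_ne u 0 with rfl | hu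
  · rw [zero_pow two_ne_zero, div_zero]
    refine (hasDerivAt_const 0 0).congr_of_eventuallyEq ?_
    filter_upwards [comp_log_eventuallyEq_nhds_zero fun t => cutoffDeriv_of_nonpos hL] with u hu
    rw [logCutoffDeriv, hu, zero_div]
  · refine (((hasDerivAt_cutoffDeriv L (log u)).comp u (hasDerivAt_log hu)).div
      (hasDerivAt_id u) hu).congr_deriv ?_
    simp only [Function.comp_apply, id_eq]
    field_simp

lemma contDiff_logCutoff (hL : 0 ≤ L) : ContDiff ℝ 2 (logCutoff L) := by
  refine contDiff_iff_contDiffAt.2 fun u => ?_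
  rcases eq_or_ne u 0 with rfl | hu
  · exact contDiffAt_const.congr_of_eventuallyEq
      (comp_log_eventuallyEq_nhds_zero fun t => cutoff_of_nonpos hL)
  · exact (contDiff_cutoff L).contDiffAt.comp u (contDiffAt_log.2 hu)

end Profile

section TestFunction

local notation "ℝ²" => EuclideanSpace ℝ (Fin 2)

variable {L : ℝ}

lemma logCutoff_zero (hL : 0 ≤ L) : logCutoff L 0 = 1 := by
  rw [logCutoff, log_zero, cutoff_of_nonpos hL le_rfl]

lemma contDiff_logCutoff_norm_sq {X : Type*} [NormedAddCommGroup X] [InnerProductSpace ℝ X]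
    (hL : 0 ≤ L) : ContDiff ℝ 2 fun x : X => logCutoff L (‖x‖ ^ 2) :=
  (contDiff_logCutoff hL).comp (contDiff_norm_sq ℝ)

lemma hasCompactSupport_logCutoff_norm_sq {X : Type*} [NormedAddCommGroup X] [ProperSpace X]
    (hL : 0 < L) : HasCompactSupport fun x : X => logCutoff L (‖x‖ ^ 2) := by
  refine HasCompactSupport.intro (isCompact_closedBall 0 (exp (L + 1))) fun x hx => ?_
  rw [mem_closedBall_zero_iff, not_le] at hx
  have h1 : 1 ≤ exp (L + 1) := one_le_exp (by linarith)
  exact cutoff_of_le hL ((le_log_iff_exp_le (by nlinarith)).2 (by nlinarith))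

lemma hasDerivAt_logCutoff_sq (hL : 0 ≤ L) (r : ℝ) :
    HasDerivAt (fun r => logCutoff L (r ^ 2)) (logCutoffDeriv L (r ^ 2) * (2 * r)) r := by
  refine ((hasDerivAt_logCutoff hL (r ^ 2)).comp r (hasDerivAt_pow 2 r)).congr_deriv ?_
  simp only [Nat.cast_ofNat, Nat.add_one_sub_one, pow_one]

lemma le_integral_lap_mul_logCutoff {v : ℝ² → ℝ} (hv : ContDiff ℝ 2 v) {C : ℝ}
    (hC : ∀ r ≥ (1 : ℝ), C ≤ ∫ x in ball 0 r, lap v x) (hL : 0 < L) :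
    C ≤ ∫ x, lap v x * logCutoff L (‖x‖ ^ 2) := by
  have hψc : HasCompactSupport fun r : ℝ => logCutoff L (r ^ 2) := by
    simpa only [Real.norm_eq_abs, sq_abs] using hasCompactSupport_logCutoff_norm_sq (X := ℝ) hL
  have hflat : ∀ r ∈ Ioo (0 : ℝ) 1, deriv (fun r => logCutoff L (r ^ 2)) r = 0 := fun r hr => by
    rw [(hasDerivAt_logCutoff_sq hL.le r).deriv, logCutoffDeriv, cutoffDeriv_of_nonpos hL.le
      (log_nonpos (sq_nonneg r) (by nlinarith [hr.1, hr.2])), zero_div, zero_mul]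
  have hanti : ∀ r ≥ (1 : ℝ), deriv (fun r => logCutoff L (r ^ 2)) r ≤ 0 := fun r hr => by
    rw [(hasDerivAt_logCutoff_sq hL.le r).deriv, logCutoffDeriv]
    exact mul_nonpos_of_nonpos_of_nonneg
      (div_nonpos_of_nonpos_of_nonneg (cutoffDeriv_nonpos hL _) (sq_nonneg r)) (by linarith)
  simpa [logCutoff_zero hL.le] using le_integral_mul_radial (continuous_lap hv)
    (((contDiff_logCutoff hL.le).comp (contDiff_id.pow 2)).of_le one_le_two) hψc hflat hanti hC

lemma lap_logCutoff_norm_sq (hL : 0 ≤ L) (x : ℝ²) :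
    lap (fun y => logCutoff L (‖y‖ ^ 2)) x = 4 * cutoffDeriv2 L (log (‖x‖ ^ 2)) / ‖x‖ ^ 2 := by
  rw [lap_comp_norm_sq (hasDerivAt_logCutoff hL) (hasDerivAt_logCutoffDeriv hL), logCutoffDeriv]
  rcases eq_or_ne (‖x‖ ^ 2) 0 with hx | hx
  · simp [hx]
  · field_simp
    push_cast
    ring

lemma lap_logCutoff_nonneg (hL : 0 < L) {x : ℝ²} (hx : exp 1 < ‖x‖ ^ 2) :
    0 ≤ lap (fun y => logCutoff L (‖y‖ ^ 2)) x := by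
  rw [lap_logCutoff_norm_sq hL.le]
  exact div_nonneg (mul_nonneg zero_le_four
    (cutoffDeriv2_nonneg hL ((lt_log_iff_exp_lt ((exp_pos 1).trans hx)).2 hx))) (sq_nonneg _)

lemma neg_le_lap_logCutoff {B : ℝ} (hB : ∀ t, deriv smoothTransition t ≤ B) (hL : 0 < L)
    (x : ℝ²) : -(4 * B / L) ≤ lap (fun y => logCutoff L (‖y‖ ^ 2)) x := by
  have hBL : 0 ≤ B / L := div_nonneg ((deriv_smoothTransition_nonneg 0).trans (hB 0)) hL.le
  have hneg : -(4 * B / L) ≤ 0 := by rw [mul_div_assoc]; linarith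
  rw [lap_logCutoff_norm_sq hL.le]
  rcases lt_or_ge (‖x‖ ^ 2) 1 with hx | hx
  · rcases (sq_nonneg ‖x‖).eq_or_lt with h0 | h0
    · rwa [← h0, div_zero]
    · rwa [cutoffDeriv2_of_neg hL.le (log_neg h0 hx), mul_zero, zero_div]
  · rw [le_div_iff₀ (by linarith), mul_div_assoc]
    nlinarith [neg_div_le_cutoffDeriv2 hB hL (log (‖x‖ ^ 2))]

lemma mul_lap_logCutoff_le_indicator {v : ℝ² → ℝ} (hneg : ∀ x, v x < 0) {M : ℝ}
    (hM : ∀ x ∈ closedBall (0 : ℝ²) 2, ‖v x‖ ≤ M) {B : ℝ}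
    (hB : ∀ t, deriv smoothTransition t ≤ B) (hL : 0 < L) (x : ℝ²) :
    v x * lap (fun y => logCutoff L (‖y‖ ^ 2)) x ≤
      (closedBall (0 : ℝ²) 2).indicator (fun _ => M * (4 * B / L)) x := by
  have hBL : 0 ≤ 4 * B / L :=
    div_nonneg (mul_nonneg zero_le_four ((deriv_smoothTransition_nonneg 0).trans (hB 0))) hL.le
  rcases lt_or_ge (exp 1) (‖x‖ ^ 2) with hx | hx
  · have hM0 : 0 ≤ M := (norm_nonneg _).trans (hM 0 (mem_closedBall_self zero_le_two))
    exact (mul_nonpos_of_nonpos_of_nonneg (hneg x).le (lap_logCutoff_nonneg hL hx)).trans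
      (indicator_nonneg (fun _ _ => mul_nonneg hM0 hBL) x)
  have hx2 : x ∈ closedBall (0 : ℝ²) 2 := by
    rw [mem_closedBall_zero_iff]
    nlinarith [exp_one_lt_d9, norm_nonneg x]
  rw [indicator_of_mem hx2]
  calc v x * lap (fun y => logCutoff L (‖y‖ ^ 2)) x ≤ v x * -(4 * B / L) :=
        mul_le_mul_of_nonpos_left (neg_le_lap_logCutoff hB hL x) (hneg x).le
    _ = -v x * (4 * B / L) := by ring
    _ ≤ M * (4 * B / L) := mul_le_mul_of_nonneg_right ((neg_le_abs _).trans (hM x hx2)) hBL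

lemma integral_mul_lap_logCutoff_le {v : ℝ² → ℝ} (hv : Continuous v) (hneg : ∀ x, v x < 0)
    {M : ℝ} (hM : ∀ x ∈ closedBall (0 : ℝ²) 2, ‖v x‖ ≤ M) {B : ℝ}
    (hB : ∀ t, deriv smoothTransition t ≤ B) (hL : 0 < L) :
    ∫ x, v x * lap (fun y => logCutoff L (‖y‖ ^ 2)) x ≤
      volume.real (closedBall (0 : ℝ²) 2) * (M * (4 * B / L)) := by
  rw [← smul_eq_mul, ← integral_indicator_const _ measurableSet_closedBall]
  exact integral_mono
    (integrable_mul_lap hv (contDiff_logCutoff_norm_sq hL.le)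
      (hasCompactSupport_logCutoff_norm_sq hL))
    ((integrableOn_const measure_closedBall_lt_top.ne).integrable_indicator
      measurableSet_closedBall)
    (mul_lap_logCutoff_le_indicator hneg hM hB hL)

end TestFunction

end

theorem stmt12 :
    ¬ ∃ (v : EuclideanSpace ℝ (Fin 2) → ℝ) (C : ℝ), ContDiff ℝ 2 v ∧
      (∀ x, v x < 0) ∧ 0 < C ∧
      ∀ r ≥ (1 : ℝ), C ≤ ∫ x in Metric.ball (0 : EuclideanSpace ℝ (Fin 2)) r, lap v x := by
  rintro ⟨v, C, hv, hneg, hC, hJ⟩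
  obtain ⟨B, hB⟩ := exists_deriv_smoothTransition_le
  obtain ⟨M, hM⟩ := (isCompact_closedBall (0 : EuclideanSpace ℝ (Fin 2)) 2)
    |>.exists_bound_of_continuousOn hv.continuous.continuousOn
  set K := volume.real (closedBall (0 : EuclideanSpace ℝ (Fin 2)) 2) * (M * 4 * B)
  have hCL : ∀ L > 0, C ≤ K / L := fun L hL => calc
    C ≤ ∫ x, lap v x * logCutoff L (‖x‖ ^ 2) := le_integral_lap_mul_logCutoff hv hJ hL
    _ = ∫ x, v x * lap (fun y => logCutoff L (‖y‖ ^ 2)) x :=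
      integral_lap_mul_eq_mul_lap hv (contDiff_logCutoff_norm_sq hL.le)
        (hasCompactSupport_logCutoff_norm_sq hL)
    _ ≤ K / L := (integral_mul_lap_logCutoff_le hv.continuous hneg hM hB hL).trans_eq (by ring)
  have hC0 : C ≤ 0 := ge_of_tendsto (tendsto_const_nhds.div_atTop tendsto_id)
    ((eventually_gt_atTop 0).mono hCL)
  linarith
end

section
/- Let N ≥ 1 and let u, w : [0,∞) → ℝ be C² with u'(0) = w'(0) = 0, u bounded below, u''(r) + (N-1)u'(r)/r = w(r) and w''(r) + (N-1)w'(r)/r < 0 for all r > 0. Then w(r) ≥ 0 for all r ≥ 0, and consequently u is nondecreasing on [0,∞). -/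
/-!
In radial coordinates the Laplacian is a divergence: `(r ^ (N - 1) f')' = r ^ (N - 1) Δf`.
Since `f'(0) = 0`, a sign condition on `Δf` therefore fixes the sign of `f'`. Applied to `w`
with `Δw < 0` this makes `w` nonincreasing. If `w` became negative at some `r₀`, then
`Δu = w ≤ w r₀ < 0` beyond `r₀`, so `u'` would tend to `-∞` and so would `u`, contradicting
the lower bound on `u`. Hence `w ≥ 0`, and then `Δu = w ≥ 0` makes `u` nondecreasing.
-/

open Set Filter

/-- The Laplacian of `x ↦ f ‖x‖` on `ℝ^(k+1)`, at radius `r`. -/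
noncomputable def radialLaplacian (k : ℕ) (f : ℝ → ℝ) (r : ℝ) : ℝ :=
  deriv (deriv f) r + k * deriv f r / r

theorem radialLaplacian_neg (k : ℕ) (f : ℝ → ℝ) (r : ℝ) :
    radialLaplacian k (fun x => -f x) r = -radialLaplacian k f r := by
  simp only [radialLaplacian, deriv.fun_neg']
  ring

theorem hasDerivAt_pow_mul_deriv (k : ℕ) {f : ℝ → ℝ} {r : ℝ} (hr : r ≠ 0)
    (hf : DifferentiableAt ℝ (deriv f) r) :
    HasDerivAt (fun s => s ^ k * deriv f s) (r ^ k * radialLaplacian k f r) r := by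
  refine ((hasDerivAt_pow k r).fun_mul hf.hasDerivAt).congr_deriv ?_
  rcases k with _ | k
  · simp [radialLaplacian]
  · simp only [radialLaplacian, pow_succ, Nat.add_sub_cancel]
    field_simp
    push_cast
    ring

theorem monotoneOn_pow_mul_deriv (k : ℕ) {f : ℝ → ℝ} (hf : Differentiable ℝ (deriv f))
    (h : ∀ r > 0, 0 ≤ radialLaplacian k f r) :
    MonotoneOn (fun s => s ^ k * deriv f s) (Ici 0) := by
  refine monotoneOn_of_deriv_nonneg (convex_Ici 0)
    ((continuous_pow k).mul hf.continuous).continuousOn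
    ((differentiable_pow k).mul hf).differentiableOn fun r hr => ?_
  rw [interior_Ici] at hr
  rw [(hasDerivAt_pow_mul_deriv k hr.ne' (hf r)).deriv]
  exact mul_nonneg (pow_nonneg hr.le k) (h r hr)

theorem monotoneOn_of_radialLaplacian_nonneg (k : ℕ) {f : ℝ → ℝ} (hf : ContDiff ℝ 2 f)
    (h0 : deriv f 0 = 0) (h : ∀ r > 0, 0 ≤ radialLaplacian k f r) :
    MonotoneOn f (Ici 0) := by
  refine monotoneOn_of_deriv_nonneg (convex_Ici 0) hf.continuous.continuousOn
    (hf.differentiable two_ne_zero).differentiableOn fun r hr => ?_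
  rw [interior_Ici] at hr
  have flux := monotoneOn_pow_mul_deriv k hf.differentiable_deriv_two h self_mem_Ici
    (mem_Ici.2 hr.le) hr.le
  simp only [h0, mul_zero] at flux
  exact nonneg_of_mul_nonneg_right flux (pow_pos hr k)

theorem antitoneOn_of_radialLaplacian_nonpos (k : ℕ) {f : ℝ → ℝ} (hf : ContDiff ℝ 2 f)
    (h0 : deriv f 0 = 0) (h : ∀ r > 0, radialLaplacian k f r ≤ 0) :
    AntitoneOn f (Ici 0) := by
  have := monotoneOn_of_radialLaplacian_nonneg k hf.neg (by simp [h0])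
    fun r hr => by simpa [radialLaplacian_neg] using h r hr
  exact fun a ha b hb hab => neg_le_neg_iff.1 (this ha hb hab)

theorem tendsto_atBot_of_deriv_tendsto_atBot {f : ℝ → ℝ} (hf : Differentiable ℝ f)
    (h : Tendsto (deriv f) atTop atBot) : Tendsto f atTop atBot := by
  obtain ⟨R, hR⟩ := eventually_atTop.1 (h.eventually_le_atBot (-1))
  have bound : ∀ r ≥ R, f r ≤ f R - (r - R) := fun r hr => by
    have := (convex_Ici R).image_sub_le_mul_sub_of_deriv_le hf.continuous.continuousOn
      hf.differentiableOn (fun x hx => hR x (interior_subset hx)) R self_mem_Ici r hr hr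
    linarith
  refine tendsto_atBot_mono' _ (eventually_atTop.2 ⟨R, bound⟩) ?_
  exact tendsto_atBot_add_const_left _ _
    (tendsto_neg_atTop_atBot.comp (tendsto_atTop_add_const_right _ _ tendsto_id))

theorem not_bddBelow_image_Ici_of_tendsto_atBot {f : ℝ → ℝ} (h : Tendsto f atTop atBot)
    (a : ℝ) :
    ¬BddBelow (f '' Ici a) := by
  rintro ⟨m, hm⟩
  obtain ⟨r, hr, har⟩ := ((h.eventually_lt_atBot m).and (eventually_ge_atTop a)).exists
  exact hr.not_ge (hm ⟨r, har, rfl⟩)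

theorem tendsto_atBot_of_radialLaplacian_le_neg (k : ℕ) {u : ℝ → ℝ} (hu : ContDiff ℝ 2 u)
    {a c : ℝ} (ha : 0 ≤ a) (hc : 0 < c) (h : ∀ r > a, radialLaplacian k u r ≤ -c) :
    Tendsto u atTop atBot := by
  have hdu := hu.differentiable_deriv_two
  -- `G` is the flux `r ^ k * v'` of `v = u + c r² / (2 (k + 1))`, and `Δv = Δu + c ≤ 0`.
  set G : ℝ → ℝ := fun s => s ^ k * deriv u s + c / (k + 1) * s ^ (k + 1)
  have hGd : Differentiable ℝ G := ((differentiable_pow k).mul hdu).add (by fun_prop)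
  have hG : AntitoneOn G (Ici a) := by
    refine antitoneOn_of_deriv_nonpos (convex_Ici a) hGd.continuous.continuousOn
      hGd.differentiableOn fun r hr => ?_
    rw [interior_Ici] at hr
    have hr0 : 0 < r := ha.trans_lt hr
    have hG' := (hasDerivAt_pow_mul_deriv k hr0.ne' (hdu r)).fun_add
      ((hasDerivAt_pow (k + 1) r).const_mul (c / (k + 1)))
    rw [hG'.deriv]
    calc _ = r ^ k * (radialLaplacian k u r + c) := by push_cast; field_simp
      _ ≤ 0 := mul_nonpos_of_nonneg_of_nonpos (pow_nonneg hr0.le k) (by linarith [h r hr])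
  set B := max (G a) 0
  have hbound : ∀ r ≥ max a 1, deriv u r ≤ B - c / (k + 1) * r := by
    intro r hr
    have hGr : r ^ k * (deriv u r + c / (k + 1) * r) ≤ B :=
      calc _ = G r := by simp only [G]; ring
        _ ≤ G a := hG self_mem_Ici (le_of_max_le_left hr) (le_of_max_le_left hr)
        _ ≤ B := le_max_left _ _
    have hrk : 1 ≤ r ^ k := one_le_pow₀ (le_of_max_le_right hr)
    rcases le_or_gt (deriv u r + c / (k + 1) * r) 0 with hneg | hpos
    · linarith [le_max_right (G a) 0]
    · linarith [le_mul_of_one_le_left hpos.le hrk]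
  refine tendsto_atBot_of_deriv_tendsto_atBot (hu.differentiable two_ne_zero) ?_
  refine tendsto_atBot_mono' _ (eventually_atTop.2 ⟨max a 1, hbound⟩) ?_
  simp only [sub_eq_add_neg]
  exact tendsto_atBot_add_const_left _ B
    (tendsto_neg_atTop_atBot.comp (tendsto_id.const_mul_atTop (by positivity)))

theorem stmt17 (N : ℕ) (hN : 1 ≤ N) (u w : ℝ → ℝ)
    (hu : ContDiff ℝ 2 u) (hw : ContDiff ℝ 2 w)
    (hu0 : deriv u 0 = 0) (hw0 : deriv w 0 = 0)
    (hbdd : BddBelow (u '' Set.Ici 0))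
    (hequ : ∀ r > (0 : ℝ),
      deriv (deriv u) r + ((N : ℝ) - 1) * deriv u r / r = w r)
    (heqw : ∀ r > (0 : ℝ),
      deriv (deriv w) r + ((N : ℝ) - 1) * deriv w r / r < 0) :
    (∀ r ≥ (0 : ℝ), 0 ≤ w r) ∧ MonotoneOn u (Set.Ici 0) := by
  obtain ⟨k, rfl⟩ : ∃ k, N = k + 1 := ⟨N - 1, by omega⟩
  have hΔu : ∀ r > 0, radialLaplacian k u r = w r := fun r hr => by
    simpa [radialLaplacian] using hequ r hr
  have hΔw : ∀ r > 0, radialLaplacian k w r ≤ 0 := fun r hr => by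
    simpa [radialLaplacian] using (heqw r hr).le
  have hw_anti := antitoneOn_of_radialLaplacian_nonpos k hw hw0 hΔw
  have hw_nonneg : ∀ r ≥ (0 : ℝ), 0 ≤ w r := by
    intro r₀ hr₀
    by_contra! hneg
    refine not_bddBelow_image_Ici_of_tendsto_atBot
      (tendsto_atBot_of_radialLaplacian_le_neg k hu hr₀ (neg_pos.2 hneg) fun r hr => ?_) 0 hbdd
    rw [hΔu r (hr₀.trans_lt hr), neg_neg]
    exact hw_anti hr₀ (hr₀.trans hr.le) hr.le
  exact ⟨hw_nonneg, monotoneOn_of_radialLaplacian_nonneg k hu hu0 fun r hr =>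
    (hΔu r hr).symm ▸ hw_nonneg r hr.le⟩
end
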